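/- arXiv:1703.10014 — 5 statements merged into one kernel-verified Lean document; each statement's English description precedes it below -/
import Mathlib

section
/- Let (X,d) and (Y,ρ) be metric spaces and let f_n, f : X → Y (n = 1,2,...). If the sequence (f_n) converges continuously to f, then (f_n) converges pointwise to f and (f_n) is exhaustive. -/
/-!
Continuous convergence of `(fₙ)` to `g` at `x` forces `(n, t) ↦ fₙ t` to tend to `g x` along
`atTop ×ˢ 𝓝 x`. Otherwise a diagonal extraction yields strictly increasing times `φ k` and points
`v k → x` with `f (φ k) (v k)` outside a fixed neighbourhood of `g x`; extending `v` by the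
constant `x` off the range of `φ` gives a sequence `u → x` along which continuous convergence
fails. Exhaustiveness then follows from the triangle inequality through `g x`.
-/

open Filter Topology

theorem Filter.Tendsto.extend_of_strictMono {X : Type*} [TopologicalSpace X] {x : X}
    {φ : ℕ → ℕ} (hφ : StrictMono φ) {v : ℕ → X} (hv : Tendsto v atTop (𝓝 x)) :
    Tendsto (Function.extend φ v fun _ => x) atTop (𝓝 x) := by
  intro s hs
  obtain ⟨K, hK⟩ := eventually_atTop.1 (hv hs)
  refine eventually_atTop.2 ⟨φ K, fun n hn => ?_⟩
  by_cases hrange : ∃ k, φ k = n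
  · obtain ⟨k, rfl⟩ := hrange
    rw [hφ.injective.extend_apply]
    exact hK k (hφ.le_iff_le.1 hn)
  · rw [Function.extend_apply' _ _ _ hrange]
    exact mem_of_mem_nhds hs

theorem tendsto_uncurry_atTop_nhds_of_seq {X Y : Type*} [TopologicalSpace X]
    [FirstCountableTopology X] [TopologicalSpace Y] {f : ℕ → X → Y} {x : X} {y : Y}
    (h : ∀ u : ℕ → X, Tendsto u atTop (𝓝 x) → Tendsto (fun n => f n (u n)) atTop (𝓝 y)) :
    Tendsto (fun p : ℕ × X => f p.1 p.2) (atTop ×ˢ 𝓝 x) (𝓝 y) := by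
  by_contra hnot
  obtain ⟨s, hs, hbad⟩ := not_tendsto_iff_exists_frequently_notMem.1 hnot
  obtain ⟨B, hB⟩ := (𝓝 x).exists_antitone_basis
  have hfreq : ∀ k, ∃ᶠ n in atTop, ∃ t ∈ B k, f n t ∉ s := by
    intro k hgood
    refine hbad (eventually_prod_iff.2 ⟨_, hgood, _, hB.mem k, ?_⟩)
    rintro n hn t ht
    simp only [not_exists, not_and, not_not] at hn
    simpa using hn t ht
  obtain ⟨φ, hφ, hφbad⟩ := extraction_forall_of_frequently hfreq
  choose v hvB hvbad using hφbad
  have hu := h _ ((hB.tendsto hvB).extend_of_strictMono hφ)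
  obtain ⟨k, hk⟩ := ((hu.comp hφ.tendsto_atTop).eventually_mem hs).exists
  apply hvbad k
  simpa [Function.comp, hφ.injective.extend_apply] using hk

/-- If `(fₙ)` converges continuously to `g`, then `(fₙ)` converges
pointwise to `g` and `(fₙ)` is exhaustive. -/
theorem continuousConv_imp_pointwise_and_exhaustive
    {X Y : Type*} [MetricSpace X] [MetricSpace Y]
    (f : ℕ → X → Y) (g : X → Y)
    (hcont : ∀ (x : X) (u : ℕ → X), Tendsto u atTop (𝓝 x) →
      Tendsto (fun n => f n (u n)) atTop (𝓝 (g x))) :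
    (∀ x : X, Tendsto (fun n => f n x) atTop (𝓝 (g x))) ∧
    (∀ x : X, ∀ ε > (0 : ℝ), ∃ δ > (0 : ℝ), ∃ n₀ : ℕ,
      ∀ t : X, dist x t < δ → ∀ n ≥ n₀, dist (f n x) (f n t) < ε) := by
  have hpointwise : ∀ x, Tendsto (fun n => f n x) atTop (𝓝 (g x)) :=
    fun x => hcont x _ tendsto_const_nhds
  refine ⟨hpointwise, fun x ε hε => ?_⟩
  have hdist : Tendsto (fun p : ℕ × X => dist (f p.1 x) (f p.1 p.2)) (atTop ×ˢ 𝓝 x) (𝓝 0) := by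
    simpa using
      ((hpointwise x).comp tendsto_fst).dist (tendsto_uncurry_atTop_nhds_of_seq (hcont x))
  obtain ⟨⟨n₀, δ⟩, ⟨-, hδ⟩, hsmall⟩ :=
    (atTop_basis.prod Metric.nhds_basis_ball).eventually_iff.1 (hdist.eventually (gt_mem_nhds hε))
  exact ⟨δ, hδ, n₀, fun t ht n hn =>
    hsmall (x := (n, t)) ⟨hn, by rwa [Metric.mem_ball, dist_comm]⟩⟩
end

section
/- Let (X,d) and (Y,ρ) be metric spaces and let f_n, f : X → Y (n = 1,2,...). If (f_n) converges pointwise to f and (f_n) is exhaustive, then (f_n) converges continuously to f. -/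
open Filter Topology

/-! Exhaustiveness at `x` says exactly that `dist (f n x) (f n t) → 0` as `n → ∞` and `t → x` jointly.
Along `(n, u n)` this gives `dist (f n x) (f n (u n)) → 0`, and pointwise convergence `f n x → g x`
transfers to `f n (u n)`. -/

theorem tendsto_dist_apply_prod_of_exhaustive {ι X Y : Type*} [Preorder ι] [PseudoMetricSpace X]
    [PseudoMetricSpace Y] {f : ι → X → Y} {x : X}
    (hexh : ∀ ε > (0 : ℝ), ∃ δ > (0 : ℝ), ∃ n₀ : ι,
      ∀ t : X, dist x t < δ → ∀ n ≥ n₀, dist (f n x) (f n t) < ε) :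
    Tendsto (fun p : ι × X => dist (f p.1 x) (f p.1 p.2)) (atTop ×ˢ 𝓝 x) (𝓝 0) := by
  refine Metric.tendsto_nhds.2 fun ε hε => ?_
  obtain ⟨δ, hδ, n₀, hclose⟩ := hexh ε hε
  filter_upwards [(eventually_ge_atTop n₀).prod_mk (Metric.ball_mem_nhds x hδ)]
    with p ⟨hn, ht⟩
  rw [Real.dist_0_eq_abs, abs_dist]
  exact hclose p.2 (by rwa [dist_comm]) p.1 hn

/-- If `(fₙ)` converges pointwise to `g` and `(fₙ)` is exhaustive,
then `(fₙ)` converges continuously to `g`. -/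
theorem pointwise_and_exhaustive_imp_continuousConv
    {X Y : Type*} [MetricSpace X] [MetricSpace Y]
    (f : ℕ → X → Y) (g : X → Y)
    (hpt : ∀ x : X, Tendsto (fun n => f n x) atTop (𝓝 (g x)))
    (hexh : ∀ x : X, ∀ ε > (0 : ℝ), ∃ δ > (0 : ℝ), ∃ n₀ : ℕ,
      ∀ t : X, dist x t < δ → ∀ n ≥ n₀, dist (f n x) (f n t) < ε) :
    ∀ (x : X) (u : ℕ → X), Tendsto u atTop (𝓝 x) →
      Tendsto (fun n => f n (u n)) atTop (𝓝 (g x)) := by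
  intro x u hu
  have hdist : Tendsto (fun n => dist (f n x) (f n (u n))) atTop (𝓝 0) :=
    (tendsto_dist_apply_prod_of_exhaustive (hexh x)).comp (tendsto_id.prodMk hu)
  exact (hpt x).congr_dist hdist
end

section
/- Let (X,d) and (Y,ρ) be metric spaces and let f_n, f : X → Y (n = 1,2,...) with (f_n) converging pointwise to f. If f is continuous, then the sequence (f_n) is weakly exhaustive. -/
open Filter Topology

/- Near `x`, the values `g t` stay within `ε / 3` of `g x`, and eventually `f n x` and `f n t`
are within `ε / 3` of `g x` and `g t`; the triangle inequality does the rest. -/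

theorem eventually_eventually_dist_lt_of_tendsto_of_continuousAt
    {ι X Y : Type*} [TopologicalSpace X] [PseudoMetricSpace Y] {l : Filter ι}
    {f : ι → X → Y} {g : X → Y} (hpt : ∀ t, Tendsto (fun n => f n t) l (𝓝 (g t)))
    {x : X} (hg : ContinuousAt g x) {ε : ℝ} (hε : 0 < ε) :
    ∀ᶠ t in 𝓝 x, ∀ᶠ n in l, dist (f n x) (f n t) < ε := by
  have hε3 : 0 < ε / 3 := by positivity
  filter_upwards [hg.eventually (Metric.ball_mem_nhds (g x) hε3)] with t hgt
  filter_upwards [Metric.tendsto_nhds.mp (hpt x) _ hε3, Metric.tendsto_nhds.mp (hpt t) _ hε3]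
    with n hx ht
  calc dist (f n x) (f n t)
      ≤ dist (f n x) (g x) + dist (g x) (g t) + dist (g t) (f n t) := dist_triangle4 _ _ _ _
    _ < ε / 3 + ε / 3 + ε / 3 := by
        rw [dist_comm (g x), dist_comm (g t) (f n t)]
        exact add_lt_add (add_lt_add hx hgt) ht
    _ = ε := by ring

/-- If `(fₙ)` converges pointwise to a continuous function `g`,
then `(fₙ)` is weakly exhaustive. -/
theorem pointwise_continuousLimit_imp_weaklyExhaustive
    {X Y : Type*} [MetricSpace X] [MetricSpace Y]
    (f : ℕ → X → Y) (g : X → Y)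
    (hpt : ∀ x : X, Tendsto (fun n => f n x) atTop (𝓝 (g x)))
    (hg : Continuous g) :
    ∀ x : X, ∀ ε > (0 : ℝ), ∃ δ > (0 : ℝ), ∀ t : X, dist t x < δ →
      ∃ n_t : ℕ, ∀ n ≥ n_t, dist (f n x) (f n t) < ε := by
  intro x ε hε
  obtain ⟨δ, hδ, hball⟩ := Metric.eventually_nhds_iff.mp
    (eventually_eventually_dist_lt_of_tendsto_of_continuousAt hpt hg.continuousAt hε)
  exact ⟨δ, hδ, fun t ht => eventually_atTop.mp (hball ht)⟩
end

section
/- Let (X,d) and (Y,ρ) be metric spaces and let f_n, f : X → Y (n = 1,2,...) with (f_n) converging pointwise to f. If the sequence (f_n) is weakly exhaustive, then f is continuous. -/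
/-!
Fix `x` and `ε`. For every `t` close to `x` the values `f n x` and `f n t` are eventually
`ε`-close, and passing to the limit gives `dist (g x) (g t) ≤ ε`; so the neighbourhood of `x`
provided by weak exhaustiveness is one on which `g` moves by at most `ε`.
-/

open Filter Topology

def WeaklyExhaustive {ι X Y : Type*} [TopologicalSpace X] [PseudoMetricSpace Y]
    (l : Filter ι) (f : ι → X → Y) : Prop :=
  ∀ x, ∀ ε > (0 : ℝ), ∀ᶠ t in 𝓝 x, ∀ᶠ n in l, dist (f n x) (f n t) < ε

theorem weaklyExhaustive_atTop_of_dist {X Y : Type*} [PseudoMetricSpace X] [PseudoMetricSpace Y]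
    {f : ℕ → X → Y}
    (hf : ∀ x : X, ∀ ε > (0 : ℝ), ∃ δ > (0 : ℝ), ∀ t : X, dist t x < δ →
      ∃ n_t : ℕ, ∀ n ≥ n_t, dist (f n x) (f n t) < ε) :
    WeaklyExhaustive atTop f := fun x ε hε ↦ by
  obtain ⟨δ, hδ, hclose⟩ := hf x ε hε
  exact Metric.eventually_nhds_iff.2 ⟨δ, hδ, fun t ht ↦ eventually_atTop.2 (hclose t ht)⟩

theorem dist_le_of_tendsto_of_eventually_dist_le {ι Y : Type*} [PseudoMetricSpace Y]
    {l : Filter ι} [l.NeBot] {u v : ι → Y} {a b : Y} {ε : ℝ}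
    (hu : Tendsto u l (𝓝 a)) (hv : Tendsto v l (𝓝 b)) (huv : ∀ᶠ n in l, dist (u n) (v n) ≤ ε) :
    dist a b ≤ ε :=
  le_of_tendsto (hu.dist hv) huv

theorem WeaklyExhaustive.continuous_of_tendsto {ι X Y : Type*} [TopologicalSpace X]
    [PseudoMetricSpace Y] {l : Filter ι} [l.NeBot] {f : ι → X → Y} {g : X → Y}
    (hf : WeaklyExhaustive l f) (hg : ∀ x, Tendsto (fun n ↦ f n x) l (𝓝 (g x))) :
    Continuous g := by
  refine continuous_iff_continuousAt.2 fun x ↦ Metric.tendsto_nhds.2 fun ε hε ↦ ?_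
  filter_upwards [hf x (ε / 2) (half_pos hε)] with t ht
  have hle : dist (g x) (g t) ≤ ε / 2 :=
    dist_le_of_tendsto_of_eventually_dist_le (hg x) (hg t) (ht.mono fun _ ↦ le_of_lt)
  rw [dist_comm]
  linarith

/-- If `(fₙ)` converges pointwise to `g` and `(fₙ)` is weakly
exhaustive, then `g` is continuous. -/
theorem pointwise_weaklyExhaustive_imp_continuousLimit
    {X Y : Type*} [MetricSpace X] [MetricSpace Y]
    (f : ℕ → X → Y) (g : X → Y)
    (hpt : ∀ x : X, Tendsto (fun n => f n x) atTop (𝓝 (g x)))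
    (hwexh : ∀ x : X, ∀ ε > (0 : ℝ), ∃ δ > (0 : ℝ), ∀ t : X, dist t x < δ →
      ∃ n_t : ℕ, ∀ n ≥ n_t, dist (f n x) (f n t) < ε) :
    Continuous g :=
  (weaklyExhaustive_atTop_of_dist hwexh).continuous_of_tendsto hpt
end

section
/- Let D be an open subset of ℝ × C([−r,0], ℝ^N) and let f_k : D → ℝ^N (k = 0,1,2,...) be arbitrary functions such that (f_k)_{k≥1} converges continuously to f_0. Let x⁰ : [σ−r, σ+a] → ℝ^N be continuous and suppose W = {(t, x⁰_t) : t ∈ [σ, σ+a]} ⊆ D. Then there exist a neighborhood V of W contained in D, a constant M > 0, and k₀ ∈ ℕ such that ‖f_k(τ,ψ)‖ ≤ M for all (τ,ψ) ∈ V and all k ≥ k₀, and also ‖f_0(τ,ψ)‖ ≤ M for all (τ,ψ) ∈ V. In particular, no uniform boundedness assumption on (f_k) is needed. -/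
/-!
Continuous convergence `f_k → f₀` on an open set `D` upgrades to convergence of `(k, q) ↦ f_k q`
along `atTop ×ˢ 𝓝 p` for every `p ∈ D`: a failure would produce indices `φ n → ∞` and points
`q n → p`, and spreading the `q n` over the positions `φ n` (with `p` elsewhere) gives a sequence
contradicting continuous convergence. In particular `f₀` is continuous, so it is bounded on the
compact trajectory `W`, and the tube lemma turns the pointwise eventual bounds near `W` into one
bound on a neighbourhood of `W`.
-/

open MeasureTheory Filter Set Topology
open scoped Classical

/-- The segment `x_t ∈ C([-r,0], ℝ^N)` of `x : ℝ → ℝ^N`, given by `x_t θ = x (t + θ)`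
whenever this restriction is continuous (which holds in all uses below). -/
noncomputable def seg {N : ℕ} (r : ℝ) (x : ℝ → EuclideanSpace ℝ (Fin N)) (t : ℝ) :
    C(Set.Icc (-r) (0 : ℝ), EuclideanSpace ℝ (Fin N)) :=
  if h : Continuous fun θ : Set.Icc (-r) (0 : ℝ) => x (t + θ.1) then ⟨_, h⟩
  else ContinuousMap.const _ (x t)

section ContinuousConvergence

variable {X Y : Type*} [TopologicalSpace X] [TopologicalSpace Y]

def TendstoContinuouslyOn (f : ℕ → X → Y) (f₀ : X → Y) (D : Set X) : Prop :=
  ∀ p ∈ D, ∀ q : ℕ → X, (∀ k, q k ∈ D) → Tendsto q atTop (𝓝 p) →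
    Tendsto (fun k => f k (q k)) atTop (𝓝 (f₀ p))

namespace TendstoContinuouslyOn

variable {f : ℕ → X → Y} {f₀ : X → Y} {D : Set X} {p : X}

theorem tendsto_apply (h : TendstoContinuouslyOn f f₀ D) (hp : p ∈ D) :
    Tendsto (fun k => f k p) atTop (𝓝 (f₀ p)) :=
  h p hp _ (fun _ => hp) tendsto_const_nhds

theorem tendsto_comp_strictMono (h : TendstoContinuouslyOn f f₀ D) (hp : p ∈ D)
    {φ : ℕ → ℕ} (hφ : StrictMono φ) {q : ℕ → X} (hqD : ∀ n, q n ∈ D)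
    (hq : Tendsto q atTop (𝓝 p)) :
    Tendsto (fun n => f (φ n) (q n)) atTop (𝓝 (f₀ p)) := by
  set q' : ℕ → X := Function.extend φ q fun _ => p
  have hq'φ : ∀ n, q' (φ n) = q n := hφ.injective.extend_apply q _
  have hq'_of_notMem : ∀ k, (¬∃ n, φ n = k) → q' k = p := fun k hk =>
    Function.extend_apply' q _ k hk
  have hq'D : ∀ k, q' k ∈ D := by
    intro k
    by_cases hk : ∃ n, φ n = k
    · obtain ⟨n, rfl⟩ := hk
      rw [hq'φ]
      exact hqD n
    · rw [hq'_of_notMem k hk]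
      exact hp
  have hq' : Tendsto q' atTop (𝓝 p) := by
    intro s hs
    obtain ⟨n₀, hn₀⟩ := eventually_atTop.1 (hq hs)
    refine eventually_atTop.2 ⟨φ n₀, fun k hk => ?_⟩
    by_cases hk' : ∃ n, φ n = k
    · obtain ⟨n, rfl⟩ := hk'
      rw [hq'φ]
      exact hn₀ n (hφ.le_iff_le.1 hk)
    · rw [hq'_of_notMem k hk']
      exact mem_of_mem_nhds hs
  simpa only [Function.comp_def, hq'φ] using
    (h p hp q' hq'D hq').comp hφ.tendsto_atTop

theorem tendsto_prod [FirstCountableTopology X] (h : TendstoContinuouslyOn f f₀ D)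
    (hD : D ∈ 𝓝 p) :
    Tendsto (fun kq : ℕ × X => f kq.1 kq.2) (atTop ×ˢ 𝓝 p) (𝓝 (f₀ p)) := by
  intro s hs
  refine mem_map.2 ?_
  obtain ⟨B, hB⟩ := (𝓝 p).exists_antitone_basis
  by_contra hbad
  have hfreq : ∀ n, ∃ᶠ k in atTop, ∃ q ∈ B n ∩ D, f k q ∉ s := by
    intro n
    by_contra! hn
    exact hbad (mem_of_superset (prod_mem_prod hn (inter_mem (hB.mem n) hD))
      fun kq hkq => hkq.1 kq.2 hkq.2)
  obtain ⟨φ, hφ, hφq⟩ := extraction_forall_of_frequently hfreq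
  choose q hq hqs using hφq
  have hlim := h.tendsto_comp_strictMono (mem_of_mem_nhds hD) hφ (fun n => (hq n).2)
    (hB.tendsto fun n => (hq n).1)
  obtain ⟨n, hn⟩ := (hlim.eventually_mem hs).exists
  exact hqs n hn

theorem continuousAt [FirstCountableTopology X] [RegularSpace Y]
    (h : TendstoContinuouslyOn f f₀ D) (hD : D ∈ 𝓝 p) : ContinuousAt f₀ p := by
  refine (closed_nhds_basis (f₀ p)).tendsto_right_iff.2 fun s ⟨hs, hsc⟩ => ?_
  obtain ⟨t₁, ht₁, t₂, ht₂, hsub⟩ := mem_prod_iff.1 (h.tendsto_prod hD hs)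
  filter_upwards [ht₂, hD] with q hq hqD
  exact hsc.mem_of_tendsto (h.tendsto_apply hqD)
    (mem_of_superset ht₁ fun k hk => hsub (mk_mem_prod hk hq))

theorem exists_isOpen_bound_of_isCompact {E : Type*} [SeminormedAddGroup E]
    [FirstCountableTopology X] {f : ℕ → X → E} {f₀ : X → E} {D K : Set X}
    (h : TendstoContinuouslyOn f f₀ D) (hD : IsOpen D) (hK : IsCompact K) (hKD : K ⊆ D) :
    ∃ V : Set X, IsOpen V ∧ K ⊆ V ∧ V ⊆ D ∧ ∃ M > (0 : ℝ), ∃ k₀ : ℕ,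
      (∀ p ∈ V, ∀ k ≥ k₀, ‖f k p‖ ≤ M) ∧ (∀ p ∈ V, ‖f₀ p‖ ≤ M) := by
  obtain ⟨C, hC⟩ := hK.exists_bound_of_continuousOn fun p hp =>
    (h.continuousAt (hD.mem_nhds (hKD hp))).continuousWithinAt
  set M := max C 0 + 1
  have hloc : ∀ p ∈ K, {kq : ℕ × X | kq.2 ∈ D ∧ ‖f kq.1 kq.2‖ < M} ∈ atTop ×ˢ 𝓝 p := by
    intro p hp
    have hpM : ‖f₀ p‖ < M := (hC p hp).trans_lt ((le_max_left C 0).trans_lt (lt_add_one _))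
    exact (tendsto_snd.eventually (hD.mem_nhds (hKD hp))).and
      ((h.tendsto_prod (hD.mem_nhds (hKD hp))).norm.eventually_lt_const hpM)
  obtain ⟨t₁, ht₁, t₂, ht₂, hsub⟩ := mem_prod_iff.1 (hK.mem_prod_nhdsSet_of_forall hloc)
  obtain ⟨V, hVo, hKV, hVt⟩ := mem_nhdsSet_iff_exists.1 ht₂
  obtain ⟨k₀, hk₀⟩ := mem_atTop_sets.1 ht₁
  have hbound : ∀ p ∈ V, ∀ k ≥ k₀, p ∈ D ∧ ‖f k p‖ < M := fun p hp k hk =>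
    hsub (mk_mem_prod (hk₀ k hk) (hVt hp))
  refine ⟨V, hVo, hKV, fun p hp => (hbound p hp k₀ le_rfl).1, M, by positivity, k₀,
    fun p hp k hk => (hbound p hp k hk).2.le, fun p hp => ?_⟩
  exact le_of_tendsto (h.tendsto_apply (hbound p hp k₀ le_rfl).1).norm
    (eventually_atTop.2 ⟨k₀, fun k hk => (hbound p hp k hk).2.le⟩)

end TendstoContinuouslyOn

end ContinuousConvergence

theorem seg_apply {N : ℕ} {r t : ℝ} {x : ℝ → EuclideanSpace ℝ (Fin N)}
    (hx : ContinuousOn x (Icc (t - r) t)) (θ : Icc (-r) (0 : ℝ)) :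
    seg r x t θ = x (t + θ) := by
  have hcont : Continuous fun θ : Icc (-r) (0 : ℝ) => x (t + θ.1) :=
    hx.comp_continuous (continuous_const.add continuous_subtype_val) fun θ =>
      ⟨by linarith [θ.2.1], by linarith [θ.2.2]⟩
  simp [seg, dif_pos hcont]

theorem continuousOn_seg {N : ℕ} {r σ a : ℝ} {x : ℝ → EuclideanSpace ℝ (Fin N)}
    (hx : ContinuousOn x (Icc (σ - r) (σ + a))) :
    ContinuousOn (seg r x) (Icc σ (σ + a)) := by
  have hmem : ∀ p : Icc σ (σ + a) × Icc (-r) (0 : ℝ), p.1.1 + p.2.1 ∈ Icc (σ - r) (σ + a) :=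
    fun ⟨⟨t, ht₁, ht₂⟩, ⟨θ, hθ₁, hθ₂⟩⟩ => ⟨by linarith, by linarith⟩
  let F : C(Icc σ (σ + a) × Icc (-r) (0 : ℝ), EuclideanSpace ℝ (Fin N)) :=
    ⟨fun p => x (p.1.1 + p.2.1), hx.comp_continuous (by fun_prop) hmem⟩
  rw [continuousOn_iff_continuous_domRestrict]
  convert F.curry.continuous using 1
  funext ⟨t, ht⟩
  exact ContinuousMap.ext (seg_apply (hx.mono fun s hs =>
    ⟨by linarith [hs.1, ht.1], by linarith [hs.2, ht.2]⟩))

theorem uniform_bound_near_trajectory_of_continuousConv_general {N : ℕ} (r σ a : ℝ)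
    (D : Set (ℝ × C(Set.Icc (-r) (0 : ℝ), EuclideanSpace ℝ (Fin N)))) (hD : IsOpen D)
    (f : ℕ → ℝ × C(Set.Icc (-r) (0 : ℝ), EuclideanSpace ℝ (Fin N)) → EuclideanSpace ℝ (Fin N))
    (f₀ : ℝ × C(Set.Icc (-r) (0 : ℝ), EuclideanSpace ℝ (Fin N)) → EuclideanSpace ℝ (Fin N))
    (hconv : ∀ p ∈ D, ∀ q : ℕ → ℝ × C(Set.Icc (-r) (0 : ℝ), EuclideanSpace ℝ (Fin N)),
      (∀ k, q k ∈ D) → Tendsto q atTop (𝓝 p) →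
        Tendsto (fun k => f k (q k)) atTop (𝓝 (f₀ p)))
    (x : ℝ → EuclideanSpace ℝ (Fin N))
    (hx : ContinuousOn x (Set.Icc (σ - r) (σ + a)))
    (hW : ∀ t ∈ Set.Icc σ (σ + a), (t, seg r x t) ∈ D) :
    ∃ V : Set (ℝ × C(Set.Icc (-r) (0 : ℝ), EuclideanSpace ℝ (Fin N))),
      IsOpen V ∧ (∀ t ∈ Set.Icc σ (σ + a), (t, seg r x t) ∈ V) ∧ V ⊆ D ∧
      ∃ M > (0 : ℝ), ∃ k₀ : ℕ,
        (∀ p ∈ V, ∀ k ≥ k₀, ‖f k p‖ ≤ M) ∧ (∀ p ∈ V, ‖f₀ p‖ ≤ M) := by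
  have hWc : IsCompact ((fun t => (t, seg r x t)) '' Icc σ (σ + a)) :=
    isCompact_Icc.image_of_continuousOn (continuousOn_id.prodMk (continuousOn_seg hx))
  obtain ⟨V, hVo, hWV, hVD, hbound⟩ :=
    TendstoContinuouslyOn.exists_isOpen_bound_of_isCompact hconv hD hWc
      (image_subset_iff.2 hW)
  exact ⟨V, hVo, image_subset_iff.1 hWV, hVD, hbound⟩

/-- Proposition 3.5. If arbitrary functions `f_k : D → ℝ^N` converge
continuously to `f₀` on the open set `D`, and `W = {(t, x⁰_t) : t ∈ [σ, σ+a]} ⊆ D` for a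
continuous `x⁰`, then there are a neighborhood `V` of `W` with `V ⊆ D`, a constant `M > 0`
and `k₀` such that `‖f_k(τ,ψ)‖ ≤ M` on `V` for all `k ≥ k₀` and also `‖f₀(τ,ψ)‖ ≤ M` on `V`;
no uniform boundedness assumption on `(f_k)` is needed. -/
theorem uniform_bound_near_trajectory_of_continuousConv {N : ℕ} (r σ a : ℝ)
    (hr : 0 ≤ r) (ha : 0 < a)
    (D : Set (ℝ × C(Set.Icc (-r) (0 : ℝ), EuclideanSpace ℝ (Fin N)))) (hD : IsOpen D)
    (f : ℕ → ℝ × C(Set.Icc (-r) (0 : ℝ), EuclideanSpace ℝ (Fin N)) → EuclideanSpace ℝ (Fin N))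
    (f₀ : ℝ × C(Set.Icc (-r) (0 : ℝ), EuclideanSpace ℝ (Fin N)) → EuclideanSpace ℝ (Fin N))
    (hconv : ∀ p ∈ D, ∀ q : ℕ → ℝ × C(Set.Icc (-r) (0 : ℝ), EuclideanSpace ℝ (Fin N)),
      (∀ k, q k ∈ D) → Tendsto q atTop (𝓝 p) →
        Tendsto (fun k => f k (q k)) atTop (𝓝 (f₀ p)))
    (x : ℝ → EuclideanSpace ℝ (Fin N))
    (hx : ContinuousOn x (Set.Icc (σ - r) (σ + a)))
    (hW : ∀ t ∈ Set.Icc σ (σ + a), (t, seg r x t) ∈ D) :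
    ∃ V : Set (ℝ × C(Set.Icc (-r) (0 : ℝ), EuclideanSpace ℝ (Fin N))),
      IsOpen V ∧ (∀ t ∈ Set.Icc σ (σ + a), (t, seg r x t) ∈ V) ∧ V ⊆ D ∧
      ∃ M > (0 : ℝ), ∃ k₀ : ℕ,
        (∀ p ∈ V, ∀ k ≥ k₀, ‖f k p‖ ≤ M) ∧ (∀ p ∈ V, ‖f₀ p‖ ≤ M) :=
  uniform_bound_near_trajectory_of_continuousConv_general r σ a D hD f f₀ hconv x hx hW
end
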